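/- arXiv:2404.02169 — 2 statements merged into one kernel-verified Lean document; each statement's English description precedes it below -/
import Mathlib

section
/- Let δ_k = (2k-N-1)/2 and λ ∈ ℂ^N with distinct entries. Then det[exp((σ²/2)(δ_k + λ_ℓ)²)]_{k,ℓ=1}^N = exp((σ²/2)((λ,λ) + (δ,δ))) · ∏_{k<ℓ} 2 sinh((σ²/2)(λ_ℓ - λ_k)). -/
open Finset

lemma prod_pairs_eq {M : Type*} [CommMonoid M] {n : ℕ} (f : Fin n → Fin n → M) :
    ∏ p ∈ Finset.univ.filter (fun p : Fin n × Fin n => p.1 < p.2), f p.1 p.2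
      = ∏ i, ∏ j ∈ Finset.Ioi i, f i j := by
  rw [Finset.prod_sigma']
  refine (Finset.prod_nbij' (fun p : Fin n × Fin n => ⟨p.1, p.2⟩)
    (fun s : Σ _ : Fin n, Fin n => (s.1, s.2)) ?_ ?_ ?_ ?_ ?_).symm.symm <;>
    simp [Finset.mem_sigma]

lemma prod_pairs_count {M : Type*} [CommMonoid M] {n : ℕ} (w : Fin n → M) :
    ∏ i, ∏ j ∈ Finset.Ioi i, (w i * w j) = ∏ i, w i ^ (n - 1) := by
  have h1 : ∀ i : Fin n, ∏ j ∈ Finset.Ioi i, (w i * w j)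
      = w i ^ (Finset.Ioi i).card * ∏ j ∈ Finset.Ioi i, w j := by
    intro i; rw [Finset.prod_mul_distrib, Finset.prod_const]
  simp_rw [h1]
  rw [Finset.prod_mul_distrib]
  have h2 : (∏ i, ∏ j ∈ Finset.Ioi i, w j) = ∏ j : Fin n, w j ^ (Finset.Iio j).card := by
    rw [Finset.prod_comm' (t' := Finset.univ) (s' := fun j => Finset.Iio j) (by simp)]
    simp [Finset.prod_const]
  rw [h2, ← Finset.prod_mul_distrib]
  refine Finset.prod_congr rfl fun i _ => ?_
  rw [← pow_add, Fin.card_Ioi, Fin.card_Iio]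
  congr 1
  omega

/-- for `δ_k = (2k - N - 1)/2` and `λ ∈ ℂᴺ` with distinct entries,
`det[exp((σ²/2)(δ_k + λ_ℓ)²)] = exp((σ²/2)((λ,λ)+(δ,δ))) ∏_{k<ℓ} 2 sinh((σ²/2)(λ_ℓ - λ_k))`. -/
theorem stmt11 (N : ℕ) (σ : ℝ) (hσ : 0 < σ) (lam : Fin N → ℂ)
    (hlam : Function.Injective lam) (δ : Fin N → ℂ)
    (hδ : ∀ k : Fin N, δ k = ((2 * ((k : ℕ) + 1 : ℂ) - N - 1) / 2)) :
    Matrix.det (Matrix.of fun k ℓ : Fin N =>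
        Complex.exp ((σ ^ 2 / 2) * (δ k + lam ℓ) ^ 2)) =
      Complex.exp ((σ ^ 2 / 2) * ((∑ k, lam k ^ 2) + ∑ k, δ k ^ 2)) *
        ∏ p ∈ Finset.univ.filter fun p : Fin N × Fin N => p.1 < p.2,
          2 * Complex.sinh ((σ ^ 2 / 2) * (lam p.2 - lam p.1)) := by
  set c : ℂ := ((σ : ℂ) ^ 2 / 2) with hc
  -- entrywise factorization
  have key : ∀ k ℓ : Fin N,
      Complex.exp (c * (δ k + lam ℓ) ^ 2)
        = Complex.exp (c * δ k ^ 2) *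
          ((Complex.exp (c * lam ℓ ^ 2) * Complex.exp (-(c * lam ℓ)) ^ (N - 1)) *
            Complex.exp (2 * c * lam ℓ) ^ (k : ℕ)) := by
    intro k ℓ
    rw [← Complex.exp_nat_mul, ← Complex.exp_nat_mul, ← Complex.exp_add, ← Complex.exp_add,
      ← Complex.exp_add]
    congr 1
    rw [hδ k]
    have hN : ((N : ℂ) - 1) = ((N - 1 : ℕ) : ℂ) ∨ N = 0 := by
      rcases Nat.eq_zero_or_pos N with h | h
      · exact Or.inr h
      · left; push_cast [Nat.cast_sub h]; ring
    rcases hN with h | h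
    · rw [← h]; ring
    · exact absurd (k.2) (by simp [h])
  calc Matrix.det (Matrix.of fun k ℓ : Fin N =>
        Complex.exp ((σ ^ 2 / 2) * (δ k + lam ℓ) ^ 2))
      = Matrix.det (Matrix.of fun k ℓ : Fin N =>
          Complex.exp (c * δ k ^ 2) *
          ((Complex.exp (c * lam ℓ ^ 2) * Complex.exp (-(c * lam ℓ)) ^ (N - 1)) *
            Complex.exp (2 * c * lam ℓ) ^ (k : ℕ))) := by
        congr 1; ext k ℓ; simpa using key k ℓ
    _ = (∏ k, Complex.exp (c * δ k ^ 2)) *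
        ((∏ ℓ, Complex.exp (c * lam ℓ ^ 2) * Complex.exp (-(c * lam ℓ)) ^ (N - 1)) *
          Matrix.det (Matrix.of fun k ℓ : Fin N =>
            Complex.exp (2 * c * lam ℓ) ^ (k : ℕ))) := by
        refine (Matrix.det_mul_column (fun k => Complex.exp (c * δ k ^ 2))
          (Matrix.of fun k ℓ : Fin N =>
            (Complex.exp (c * lam ℓ ^ 2) * Complex.exp (-(c * lam ℓ)) ^ (N - 1)) *
              Complex.exp (2 * c * lam ℓ) ^ (k : ℕ))).trans ?_
        congr 1
        exact Matrix.det_mul_row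
          (fun ℓ => Complex.exp (c * lam ℓ ^ 2) * Complex.exp (-(c * lam ℓ)) ^ (N - 1))
          (Matrix.of fun k ℓ : Fin N => Complex.exp (2 * c * lam ℓ) ^ (k : ℕ))
    _ = _ := by
        have hvdm : Matrix.det (Matrix.of fun k ℓ : Fin N =>
            Complex.exp (2 * c * lam ℓ) ^ (k : ℕ))
            = ∏ i : Fin N, ∏ j ∈ Finset.Ioi i,
                (Complex.exp (2 * c * lam j) - Complex.exp (2 * c * lam i)) := by
          have hT : (Matrix.of fun k ℓ : Fin N =>
              Complex.exp (2 * c * lam ℓ) ^ (k : ℕ))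
            = (Matrix.vandermonde fun ℓ => Complex.exp (2 * c * lam ℓ)).transpose := rfl
          rw [hT, Matrix.det_transpose, Matrix.det_vandermonde]
        rw [hvdm]
        rw [Finset.prod_mul_distrib]
        have hw : ∀ ℓ : Fin N, Complex.exp (-(c * lam ℓ)) ^ (N - 1)
            = (fun ℓ => (Complex.exp (c * lam ℓ))⁻¹) ℓ ^ (N - 1) := by
          intro ℓ; simp [Complex.exp_neg]
        simp_rw [hw]
        rw [← prod_pairs_count (fun ℓ => (Complex.exp (c * lam ℓ))⁻¹)]
        rw [prod_pairs_eq (f := fun i j : Fin N =>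
          2 * Complex.sinh (c * (lam j - lam i)))]
        have hQ : (∏ i, ∏ j ∈ Finset.Ioi i,
              ((Complex.exp (c * lam i))⁻¹ * (Complex.exp (c * lam j))⁻¹)) *
            (∏ i, ∏ j ∈ Finset.Ioi i,
              (Complex.exp (2 * c * lam j) - Complex.exp (2 * c * lam i)))
            = ∏ i, ∏ j ∈ Finset.Ioi i, 2 * Complex.sinh (c * (lam j - lam i)) := by
          rw [← Finset.prod_mul_distrib]
          refine Finset.prod_congr rfl fun i _ => ?_
          rw [← Finset.prod_mul_distrib]
          refine Finset.prod_congr rfl fun j _ => ?_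
          have h2 : ∀ x : Fin N, Complex.exp (2 * c * lam x) = Complex.exp (c * lam x) ^ 2 := by
            intro x; rw [sq, ← Complex.exp_add]; ring_nf
          rw [Complex.two_sinh, Complex.exp_neg, mul_sub c, Complex.exp_sub, h2, h2]
          have hne : ∀ z : ℂ, Complex.exp z ≠ 0 := Complex.exp_ne_zero
          field_simp
        rw [mul_add, Complex.exp_add, Finset.mul_sum, Finset.mul_sum,
          Complex.exp_sum, Complex.exp_sum, ← hQ]
        ring
end

section
/- For λ ∈ ℂ^N with distinct components, det[exp(σ² δ_k λ_ℓ)]_{k,ℓ=1}^N = ∏_{k=1}^N exp(-(σ²/2)(N-1)λ_k) · V(e^{σ²λ_1},…,e^{σ²λ_N}) = ∏_{k<ℓ} 2 sinh((σ²/2)(λ_ℓ - λ_k)), where δ_k = (2k-N-1)/2 and V is the Vandermonde polynomial. -/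
open Finset in
lemma aux_prod_filter_lt {M : Type*} [CommMonoid M] (N : ℕ) (f : Fin N → Fin N → M) :
    ∏ p ∈ Finset.univ.filter (fun p : Fin N × Fin N => p.1 < p.2), f p.1 p.2 =
      ∏ i, ∏ j ∈ Finset.Ioi i, f i j := by
  rw [Finset.prod_finset_product _ Finset.univ (fun i => Finset.Ioi i)]
  intro p
  simp [Finset.mem_Ioi]

open Finset in
lemma aux_sum_filter_lt (N : ℕ) (h : Fin N → ℂ) :
    ∑ p ∈ Finset.univ.filter (fun p : Fin N × Fin N => p.1 < p.2), (h p.1 + h p.2) =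
      ((N : ℂ) - 1) * ∑ i, h i := by
  have h1 : ∑ p ∈ Finset.univ.filter (fun p : Fin N × Fin N => p.1 < p.2), h p.1 =
      ∑ i : Fin N, ((N - 1 - i.val : ℕ) : ℂ) * h i := by
    rw [Finset.sum_finset_product _ Finset.univ (fun i => Finset.Ioi i)
      (by intro p; simp [Finset.mem_Ioi])]
    refine Finset.sum_congr rfl fun i _ => ?_
    show ∑ _a ∈ Finset.Ioi i, h i = _
    rw [Finset.sum_const, Fin.card_Ioi, nsmul_eq_mul]
  have h2 : ∑ p ∈ Finset.univ.filter (fun p : Fin N × Fin N => p.1 < p.2), h p.2 =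
      ∑ i : Fin N, ((i.val : ℕ) : ℂ) * h i := by
    rw [Finset.sum_finset_product_right _ Finset.univ (fun j => Finset.Iio j)
      (by intro p; simp [Finset.mem_Iio])]
    refine Finset.sum_congr rfl fun i _ => ?_
    show ∑ _a ∈ Finset.Iio i, h i = _
    rw [Finset.sum_const, Fin.card_Iio, nsmul_eq_mul]
  rw [Finset.sum_add_distrib, h1, h2, ← Finset.sum_add_distrib, Finset.mul_sum]
  refine Finset.sum_congr rfl fun i _ => ?_
  have hi : (i : ℕ) < N := i.isLt
  have key : ((N - 1 - (i : ℕ) : ℕ) : ℂ) = (N : ℂ) - 1 - (i : ℕ) := by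
    have h3 : (N - 1 - (i : ℕ) : ℕ) + 1 + (i : ℕ) = N := by omega
    have h4 := congrArg (fun n : ℕ => (n : ℂ)) h3
    push_cast at h4
    linear_combination h4
  rw [key]; ring

/-- for `λ ∈ ℂᴺ` with distinct components and `δ_k = (2k - N - 1)/2`,
`det[exp(σ² δ_k λ_ℓ)] = ∏_k exp(-(σ²/2)(N-1)λ_k) · V(e^{σ²λ_1},…,e^{σ²λ_N})
                      = ∏_{k<ℓ} 2 sinh((σ²/2)(λ_ℓ - λ_k))`,
where `V` is the Vandermonde polynomial. -/
theorem stmt12 (N : ℕ) (σ : ℝ) (hσ : 0 < σ) (lam : Fin N → ℂ)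
    (hlam : Function.Injective lam) (δ : Fin N → ℂ)
    (hδ : ∀ k : Fin N, δ k = ((2 * ((k : ℕ) + 1 : ℂ) - N - 1) / 2)) :
    Matrix.det (Matrix.of fun k ℓ : Fin N =>
        Complex.exp ((σ ^ 2 : ℂ) * δ k * lam ℓ)) =
      (∏ k, Complex.exp (-((σ ^ 2 : ℂ) / 2) * (N - 1) * lam k)) *
        (∏ p ∈ Finset.univ.filter fun p : Fin N × Fin N => p.1 < p.2,
          (Complex.exp ((σ ^ 2 : ℂ) * lam p.2) - Complex.exp ((σ ^ 2 : ℂ) * lam p.1))) ∧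
    Matrix.det (Matrix.of fun k ℓ : Fin N =>
        Complex.exp ((σ ^ 2 : ℂ) * δ k * lam ℓ)) =
      ∏ p ∈ Finset.univ.filter fun p : Fin N × Fin N => p.1 < p.2,
        2 * Complex.sinh ((σ ^ 2 / 2 : ℂ) * (lam p.2 - lam p.1)) := by
  set c : Fin N → ℂ := fun ℓ => Complex.exp (-((σ ^ 2 : ℂ) / 2) * (N - 1) * lam ℓ) with hc
  set w : Fin N → ℂ := fun ℓ => Complex.exp ((σ ^ 2 : ℂ) * lam ℓ) with hw
  have hentry : (Matrix.of fun k ℓ : Fin N =>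
      Complex.exp ((σ ^ 2 : ℂ) * δ k * lam ℓ)) =
      Matrix.transpose (Matrix.of fun ℓ k : Fin N => c ℓ * Matrix.vandermonde w ℓ k) := by
    ext k ℓ
    simp only [Matrix.of_apply, Matrix.transpose_apply, Matrix.vandermonde_apply, hc, hw]
    rw [hδ k, ← Complex.exp_nat_mul, ← Complex.exp_add]
    congr 1
    push_cast
    ring
  have hdet : Matrix.det (Matrix.of fun k ℓ : Fin N =>
      Complex.exp ((σ ^ 2 : ℂ) * δ k * lam ℓ)) =
      (∏ k, c k) * ∏ p ∈ Finset.univ.filter (fun p : Fin N × Fin N => p.1 < p.2),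
        (w p.2 - w p.1) := by
    rw [hentry, Matrix.det_transpose, Matrix.det_mul_column c (Matrix.vandermonde w),
      Matrix.det_vandermonde, aux_prod_filter_lt N (fun i j => w j - w i)]
  refine ⟨hdet, ?_⟩
  rw [hdet]
  have hpair : ∀ p : Fin N × Fin N,
      w p.2 - w p.1 = (2 * Complex.sinh ((σ ^ 2 / 2 : ℂ) * (lam p.2 - lam p.1))) *
        Complex.exp (((σ ^ 2 : ℂ) / 2) * (lam p.1 + lam p.2)) := by
    intro p
    simp only [hw]
    rw [Complex.two_sinh, sub_mul, ← Complex.exp_add, ← Complex.exp_add]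
    congr 2 <;> ring
  have hsplit : ∏ p ∈ Finset.univ.filter (fun p : Fin N × Fin N => p.1 < p.2),
      (w p.2 - w p.1) =
      (∏ p ∈ Finset.univ.filter (fun p : Fin N × Fin N => p.1 < p.2),
        2 * Complex.sinh ((σ ^ 2 / 2 : ℂ) * (lam p.2 - lam p.1))) *
      ∏ p ∈ Finset.univ.filter (fun p : Fin N × Fin N => p.1 < p.2),
        Complex.exp (((σ ^ 2 : ℂ) / 2) * (lam p.1 + lam p.2)) := by
    rw [← Finset.prod_mul_distrib]
    exact Finset.prod_congr rfl fun p _ => hpair p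
  rw [hsplit]
  have hcancel : (∏ k, c k) *
      ∏ p ∈ Finset.univ.filter (fun p : Fin N × Fin N => p.1 < p.2),
        Complex.exp (((σ ^ 2 : ℂ) / 2) * (lam p.1 + lam p.2)) = 1 := by
    simp only [hc]
    rw [← Complex.exp_sum, ← Complex.exp_sum, ← Complex.exp_add]
    have key : ∑ p ∈ Finset.univ.filter (fun p : Fin N × Fin N => p.1 < p.2),
        ((((σ ^ 2 : ℂ) / 2) * lam p.1) + (((σ ^ 2 : ℂ) / 2) * lam p.2)) =
        ((N : ℂ) - 1) * ∑ i, ((σ ^ 2 : ℂ) / 2) * lam i :=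
      aux_sum_filter_lt N (fun i => ((σ ^ 2 : ℂ) / 2) * lam i)
    have hzero : (∑ k, -((σ ^ 2 : ℂ) / 2) * ((N : ℂ) - 1) * lam k) +
        ∑ p ∈ Finset.univ.filter (fun p : Fin N × Fin N => p.1 < p.2),
          ((σ ^ 2 : ℂ) / 2) * (lam p.1 + lam p.2) = 0 := by
      simp only [mul_add] at key ⊢
      rw [key, Finset.mul_sum, ← Finset.sum_add_distrib]
      apply Finset.sum_eq_zero
      intro i _
      ring
    rw [hzero, Complex.exp_zero]
  calc (∏ k, c k) *
      ((∏ p ∈ Finset.univ.filter (fun p : Fin N × Fin N => p.1 < p.2),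
        2 * Complex.sinh ((σ ^ 2 / 2 : ℂ) * (lam p.2 - lam p.1))) *
      ∏ p ∈ Finset.univ.filter (fun p : Fin N × Fin N => p.1 < p.2),
        Complex.exp (((σ ^ 2 : ℂ) / 2) * (lam p.1 + lam p.2)))
      = ((∏ k, c k) *
        ∏ p ∈ Finset.univ.filter (fun p : Fin N × Fin N => p.1 < p.2),
          Complex.exp (((σ ^ 2 : ℂ) / 2) * (lam p.1 + lam p.2))) *
        ∏ p ∈ Finset.univ.filter (fun p : Fin N × Fin N => p.1 < p.2),
          2 * Complex.sinh ((σ ^ 2 / 2 : ℂ) * (lam p.2 - lam p.1)) := by ring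
    _ = _ := by rw [hcancel, one_mul]
end
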